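/- arXiv:2010.13614 — 5 statements merged into one kernel-verified Lean document; each statement's English description precedes it below -/
import Mathlib

section
/- Let k be an algebraically closed field of characteristic p > 0 and let W_n(k(x)) denote the ring of length-n truncated Witt vectors over the rational function field k(x), n ≥ 1. Let G = (G^1, …, G^n) ∈ W_n(k(x)) and let A and B be disjoint finite subsets of k such that every component G^i is regular at every point of k ∖ (A ∪ B) (i.e., for every b ∈ k ∖ (A ∪ B), G^i lies in the local ring of rational functions with no pole at b). Then there exist G_A, G_B ∈ W_n(k(x)) with G = G_A + G_B (addition in the Witt vector ring) such that every component of G_A is regular at every point of k ∖ A and every component of G_B is regular at every point of k ∖ B. -/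
/-- A rational function `f ∈ k(x)` is *regular at* `b ∈ k` (has no pole at `b`) if it can
be written as a quotient `q / r` of polynomials with `r(b) ≠ 0`; equivalently, `f` lies in
the local ring of `k[x]` at the maximal ideal `(x - b)`. -/
def RegularAt (k : Type) [Field k] (f : RatFunc k) (b : k) : Prop :=
  ∃ q r : Polynomial k, Polynomial.eval b r ≠ 0 ∧
    f = algebraMap (Polynomial k) (RatFunc k) q / algebraMap (Polynomial k) (RatFunc k) r

/-!
Rational functions regular away from `A` form a subring `regularAwayFrom A` of `k(x)`. Over an
algebraically closed field, the reduced denominator of `f ∈ regularAwayFrom (A ∪ B)` factors as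
`d_A * d_B` with roots in `A` and in `B` respectively; these are coprime, and a Bézout relation
`u d_A + v d_B = 1` gives the partial fraction decomposition `f = num v / d_A + num u / d_B`.

For Witt vectors with coordinates in a subring `S = S_A + S_B`, split the zeroth coordinate as
`a + b` and subtract the Teichmüller lifts `[a] + [b]`. What is left has zeroth coordinate `0`,
so it is `V y` with `y` again having coordinates in `S` (Witt vectors with coordinates in `S`
form a subring, the image of `W(S)`), and induction on the length splits `y`.
-/

open Polynomial

theorem Polynomial.eval_multiset_prod_X_sub_C_ne_zero {R : Type*} [CommRing R] [IsDomain R]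
    {s : Multiset R} {b : R} (hb : b ∉ s) : ((s.map (X - C ·)).prod).eval b ≠ 0 := by
  simpa [eval_multiset_prod, Multiset.prod_eq_zero_iff, sub_eq_zero] using hb

section RegularAt

variable {k : Type} [Field k]

theorem regularAt_iff_eval_denom_ne_zero {f : RatFunc k} {b : k} :
    RegularAt k f b ↔ f.denom.eval b ≠ 0 := by
  refine ⟨?_, fun h => ⟨f.num, f.denom, h, (RatFunc.num_div_denom f).symm⟩⟩
  rintro ⟨q, r, hr, rfl⟩ hb
  exact hr (eval_eq_zero_of_dvd_of_eval_eq_zero (RatFunc.denom_div_dvd q r) hb)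

theorem RegularAt.of_denom_dvd {f g : RatFunc k} {b : k} (hg : RegularAt k g b)
    (h : f.denom ∣ g.denom) : RegularAt k f b := by
  rw [regularAt_iff_eval_denom_ne_zero] at hg ⊢
  exact fun hb => hg (eval_eq_zero_of_dvd_of_eval_eq_zero h hb)

theorem RegularAt.of_denom_dvd_mul {f g h : RatFunc k} {b : k} (hg : RegularAt k g b)
    (hh : RegularAt k h b) (hf : f.denom ∣ g.denom * h.denom) : RegularAt k f b := by
  rw [regularAt_iff_eval_denom_ne_zero] at hg hh ⊢
  refine fun hb => ?_
  simpa [hg, hh] using eval_eq_zero_of_dvd_of_eval_eq_zero hf hb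

theorem RatFunc.denom_neg_dvd (f : RatFunc k) : (-f).denom ∣ f.denom := by
  simpa only [map_neg, neg_div, RatFunc.num_div_denom] using RatFunc.denom_div_dvd (-f.num) f.denom

def regularAwayFrom (A : Set k) : Subring (RatFunc k) where
  carrier := {f | ∀ b ∉ A, RegularAt k f b}
  zero_mem' _ _ := regularAt_iff_eval_denom_ne_zero.2 (by simp)
  one_mem' _ _ := regularAt_iff_eval_denom_ne_zero.2 (by simp)
  add_mem' hf hg b hb := (hf b hb).of_denom_dvd_mul (hg b hb) (RatFunc.denom_add_dvd _ _)
  mul_mem' hf hg b hb := (hf b hb).of_denom_dvd_mul (hg b hb) (RatFunc.denom_mul_dvd _ _)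
  neg_mem' hf b hb := (hf b hb).of_denom_dvd (RatFunc.denom_neg_dvd _)

theorem regularAwayFrom_mono {A B : Set k} (h : A ⊆ B) : regularAwayFrom A ≤ regularAwayFrom B :=
  fun _ hf b hb => hf b (fun hbA => hb (h hbA))

theorem div_mem_regularAwayFrom {A : Set k} {q d : k[X]} (hd : ∀ b ∉ A, d.eval b ≠ 0) :
    algebraMap k[X] (RatFunc k) q / algebraMap k[X] (RatFunc k) d ∈ regularAwayFrom A :=
  fun b hb => ⟨q, d, hd b hb, rfl⟩

theorem exists_add_of_mem_regularAwayFrom_union [IsAlgClosed k] {A B : Set k}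
    (hAB : Disjoint A B) {f : RatFunc k} (hf : f ∈ regularAwayFrom (A ∪ B)) :
    ∃ fA ∈ regularAwayFrom A, ∃ fB ∈ regularAwayFrom B, fA + fB = f := by
  classical
  set dA := ((f.denom.roots.filter (· ∈ A)).map (X - C ·)).prod
  set dB := ((f.denom.roots.filter (· ∉ A)).map (X - C ·)).prod
  have hdenom : dA * dB = f.denom := by
    rw [← Multiset.prod_add, ← Multiset.map_add, Multiset.filter_add_not,
      ← (IsAlgClosed.splits _).eq_prod_roots_of_monic (RatFunc.monic_denom f)]
  have hA : ∀ b ∉ A, dA.eval b ≠ 0 := fun b hb =>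
    eval_multiset_prod_X_sub_C_ne_zero fun hmem => hb (Multiset.mem_filter.1 hmem).2
  have hB : ∀ b ∉ B, dB.eval b ≠ 0 := by
    refine fun b hb => eval_multiset_prod_X_sub_C_ne_zero fun hmem => ?_
    obtain ⟨hroot, hbA⟩ := Multiset.mem_filter.1 hmem
    exact regularAt_iff_eval_denom_ne_zero.1 (hf b (by simp [hbA, hb])) (isRoot_of_mem_roots hroot)
  obtain ⟨u, v, huv⟩ : IsCoprime dA dB := by
    refine (isCoprime_iff_aeval_ne_zero_of_isAlgClosed k k dA dB).2 fun b => ?_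
    simp only [coe_aeval_eq_eval]
    by_cases hb : b ∈ A
    · exact .inr (hB b (Set.disjoint_left.1 hAB hb))
    · exact .inl (hA b hb)
  refine ⟨_, div_mem_regularAwayFrom (q := f.num * v) hA,
    _, div_mem_regularAwayFrom (q := f.num * u) hB, ?_⟩
  have hprod : dA * dB ≠ 0 := hdenom ▸ f.denom_ne_zero
  have hdA := RatFunc.algebraMap_ne_zero (left_ne_zero_of_mul hprod)
  have hdB := RatFunc.algebraMap_ne_zero (right_ne_zero_of_mul hprod)
  conv_rhs => rw [← RatFunc.num_div_denom f, ← hdenom]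
  rw [div_add_div _ _ hdA hdB, ← map_mul, ← map_mul, ← map_mul, ← map_add]
  congr 2
  linear_combination f.num * huv

end RegularAt

namespace WittVector

variable {p : ℕ} [Fact p.Prime] {R : Type*} [CommRing R]

local notation "𝕎" => WittVector p

variable (p) in
noncomputable def coeffSubring (S : Subring R) : Subring (𝕎 R) := (map (p := p) S.subtype).range

theorem mem_coeffSubring {S : Subring R} {x : 𝕎 R} :
    x ∈ coeffSubring p S ↔ ∀ n, x.coeff n ∈ S := by
  refine ⟨?_, fun h => ⟨mk p fun n => ⟨x.coeff n, h n⟩, ext fun n => by simp [map_coeff]⟩⟩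
  rintro ⟨y, rfl⟩ n
  simp [map_coeff]

theorem coeffSubring_mono {S T : Subring R} (h : S ≤ T) : coeffSubring p S ≤ coeffSubring p T :=
  fun _ hx => mem_coeffSubring.2 fun n => h (mem_coeffSubring.1 hx n)

theorem teichmuller_mem_coeffSubring {S : Subring R} {a : R} (ha : a ∈ S) :
    teichmuller p a ∈ coeffSubring p S :=
  ⟨teichmuller p ⟨a, ha⟩, map_teichmuller p S.subtype _⟩

theorem verschiebung_mem_coeffSubring {S : Subring R} {x : 𝕎 R} (hx : x ∈ coeffSubring p S) :
    verschiebung x ∈ coeffSubring p S := by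
  obtain ⟨y, rfl⟩ := hx
  exact ⟨verschiebung y, map_verschiebung _ _⟩

theorem shift_mem_coeffSubring {S : Subring R} {x : 𝕎 R} (hx : x ∈ coeffSubring p S) (k : ℕ) :
    x.shift k ∈ coeffSubring p S :=
  mem_coeffSubring.2 fun n => mem_coeffSubring.1 hx (k + n)

theorem truncate_verschiebung_congr {x y : 𝕎 R} {n : ℕ} (h : truncate n x = truncate n y) :
    truncate (n + 1) (verschiebung x) = truncate (n + 1) (verschiebung y) := by
  ext i
  refine Fin.cases ?_ (fun j => ?_) i
  · simp [verschiebung_coeff_zero]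
  · simpa [verschiebung_coeff_succ] using congr_arg (TruncatedWittVector.coeff j) h

theorem exists_truncate_add_eq {S SA SB : Subring R} (hA : SA ≤ S) (hB : SB ≤ S)
    (hsplit : ∀ s ∈ S, ∃ a ∈ SA, ∃ b ∈ SB, a + b = s) (n : ℕ) {x : 𝕎 R}
    (hx : x ∈ coeffSubring p S) :
    ∃ xA ∈ coeffSubring p SA, ∃ xB ∈ coeffSubring p SB, truncate n (xA + xB) = truncate n x := by
  induction n generalizing x with
  | zero => exact ⟨0, zero_mem _, 0, zero_mem _, TruncatedWittVector.ext fun i => i.elim0⟩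
  | succ n ih =>
    obtain ⟨a, ha, b, hb, hab⟩ := hsplit _ (mem_coeffSubring.1 hx 0)
    set y := x - teichmuller p a - teichmuller p b
    have hy : y ∈ coeffSubring p S :=
      sub_mem (sub_mem hx (coeffSubring_mono hA (teichmuller_mem_coeffSubring ha)))
        (coeffSubring_mono hB (teichmuller_mem_coeffSubring hb))
    have hy0 : constantCoeff y = 0 := by
      simp only [y, map_sub, constantCoeff_apply, teichmuller_coeff_zero, ← hab]
      ring
    have hxy : x = teichmuller p a + teichmuller p b + verschiebung (y.shift 1) := by
      rw [← Function.iterate_one verschiebung, ← eq_iterate_verschiebung (by simpa using hy0)]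
      ring
    obtain ⟨yA, hyA, yB, hyB, hyAB⟩ := ih (shift_mem_coeffSubring hy 1)
    refine ⟨teichmuller p a + verschiebung yA,
      add_mem (teichmuller_mem_coeffSubring ha) (verschiebung_mem_coeffSubring hyA),
      teichmuller p b + verschiebung yB,
      add_mem (teichmuller_mem_coeffSubring hb) (verschiebung_mem_coeffSubring hyB), ?_⟩
    have hV := truncate_verschiebung_congr hyAB
    rw [map_add] at hV
    rw [hxy, map_add (truncate _) _ (verschiebung _), ← hV]
    simp only [map_add]
    ring

end WittVector

namespace TruncatedWittVector

variable {p : ℕ} [Fact p.Prime] {R : Type*} [CommRing R]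

theorem out_mem_coeffSubring {S : Subring R} {n : ℕ} {x : TruncatedWittVector p n R}
    (hx : ∀ i, x.coeff i ∈ S) : x.out ∈ WittVector.coeffSubring p S := by
  refine WittVector.mem_coeffSubring.2 fun m => ?_
  by_cases hm : m < n
  · exact coeff_out x ⟨m, hm⟩ ▸ hx ⟨m, hm⟩
  · simp [out, hm]

theorem exists_eq_add_of_coeff_mem {S SA SB : Subring R} (hA : SA ≤ S) (hB : SB ≤ S)
    (hsplit : ∀ s ∈ S, ∃ a ∈ SA, ∃ b ∈ SB, a + b = s) {n : ℕ}
    {x : TruncatedWittVector p n R} (hx : ∀ i, x.coeff i ∈ S) :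
    ∃ xA xB : TruncatedWittVector p n R,
      x = xA + xB ∧ (∀ i, xA.coeff i ∈ SA) ∧ (∀ i, xB.coeff i ∈ SB) := by
  obtain ⟨xA, hxA, xB, hxB, h⟩ :=
    WittVector.exists_truncate_add_eq hA hB hsplit n (out_mem_coeffSubring hx)
  refine ⟨WittVector.truncate n xA, WittVector.truncate n xB, ?_, fun i => ?_, fun i => ?_⟩
  · rw [← map_add, h]
    exact (truncateFun_out x).symm
  · simpa using WittVector.mem_coeffSubring.1 hxA i
  · simpa using WittVector.mem_coeffSubring.1 hxB i

end TruncatedWittVector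

theorem wittVector_partition_general
    (p : ℕ) [Fact p.Prime] (k : Type) [Field k] [IsAlgClosed k]
    (n : ℕ)
    (G : TruncatedWittVector p n (RatFunc k))
    (A B : Finset k) (hAB : Disjoint A B)
    (hreg : ∀ (i : Fin n) (b : k), b ∉ A → b ∉ B →
      RegularAt k (TruncatedWittVector.coeff i G) b) :
    ∃ GA GB : TruncatedWittVector p n (RatFunc k),
      G = GA + GB ∧
      (∀ (i : Fin n) (b : k), b ∉ A → RegularAt k (TruncatedWittVector.coeff i GA) b) ∧
      (∀ (i : Fin n) (b : k), b ∉ B → RegularAt k (TruncatedWittVector.coeff i GB) b) := by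
  obtain ⟨GA, GB, hG, hGA, hGB⟩ := TruncatedWittVector.exists_eq_add_of_coeff_mem
    (S := regularAwayFrom (A ∪ B : Set k)) (SA := regularAwayFrom A) (SB := regularAwayFrom B)
    (regularAwayFrom_mono Set.subset_union_left) (regularAwayFrom_mono Set.subset_union_right)
    (fun _ => exists_add_of_mem_regularAwayFrom_union (Finset.disjoint_coe.2 hAB))
    (fun i b hb => hreg i b (fun h => hb (.inl h)) (fun h => hb (.inr h)))
  exact ⟨GA, GB, hG, hGA, hGB⟩

/-- **Partition of Witt vectors according to poles** (Proposition 5.3 of the paper):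
let `k` be an algebraically closed field of characteristic `p > 0` and `G` a length-`n`
truncated Witt vector over `k(x)`. If `A` and `B` are disjoint finite subsets of `k` such
that every component of `G` is regular at every point of `k ∖ (A ∪ B)`, then `G` can be
written as a sum `G = G_A + G_B` of truncated Witt vectors, where every component of `G_A`
is regular away from `A`, and every component of `G_B` is regular away from `B`. -/
theorem wittVector_partition
    (p : ℕ) [Fact p.Prime] (k : Type) [Field k] [IsAlgClosed k] [CharP k p]
    (n : ℕ) (hn : 1 ≤ n)
    (G : TruncatedWittVector p n (RatFunc k))
    (A B : Finset k) (hAB : Disjoint A B)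
    (hreg : ∀ (i : Fin n) (b : k), b ∉ A → b ∉ B →
      RegularAt k (TruncatedWittVector.coeff i G) b) :
    ∃ GA GB : TruncatedWittVector p n (RatFunc k),
      G = GA + GB ∧
      (∀ (i : Fin n) (b : k), b ∉ A → RegularAt k (TruncatedWittVector.coeff i GA) b) ∧
      (∀ (i : Fin n) (b : k), b ∉ B → RegularAt k (TruncatedWittVector.coeff i GB) b) :=
  wittVector_partition_general p k n G A B hAB hreg
end

section
/- Let p be a prime and K a perfect field of characteristic p equipped with an additive valuation ν : K → ℚ ∪ {∞} (ν(0) = ∞, ν(uv) = ν(u) + ν(v), ν(u + v) ≥ min(ν(u), ν(v))). Let r_0, δ ∈ ℚ with δ ≥ 0, let N ≥ 1 be an integer, and let (a_i)_{i ≥ 1} be elements of K with ν(a_i) ≥ p(r_0·i − δ) for all i ≥ 1. Then there exist b_1, …, b_N ∈ K with ν(b_j) ≥ p(r_0·j − δ) for 1 ≤ j ≤ N such that, defining for k ≥ 1: c_k := a_k + (b_{k/p})^p·[p ∣ k and k/p ≤ N] − b_k·[k ≤ N], one has ν(c_k) ≥ p(r_0·k − δ) for all k ≥ 1, and c_{pk}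 = 0 for all 1 ≤ k ≤ N. (Equivalently: for a := Σ_{j=1}^N b_j x^{−j} and F := Σ_{i ≥ 1} a_i x^{−i}, the coefficients c_k of x^{−k} in F + a^p − a satisfy these conditions, using that (Σ b_j x^{−j})^p = Σ b_j^p x^{−pj} in characteristic p.) -/
/-!
Choose `b_j` by descending recursion: `b_j` is a `p`-th root of `b_{pj} - a_{pj}`, where
`b_{pj}` is replaced by `0` once `pj > N`; this makes `c_{pj} = 0`. Descending induction on `j`
gives the sharper bound `ν(b_j) ≥ r₀·pj - δ`, because
`ν(b_j^p) ≥ min(ν(a_{pj}), ν(b_{pj}))` and `p(r₀·pj - δ) ≤ r₀·p²j - δ` for `δ ≥ 0`.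
The sharper bound implies the required one for the same reason.
-/

namespace WithTop

variable {α : Type*}

theorem nsmul_top [AddMonoid α] {n : ℕ} (hn : n ≠ 0) : n • (⊤ : WithTop α) = ⊤ := by
  obtain ⟨k, rfl⟩ := Nat.exists_eq_succ_of_ne_zero hn
  rfl

theorem nsmul_le_nsmul_iff [AddCommMonoid α] [LinearOrder α] [IsOrderedCancelAddMonoid α]
    {n : ℕ} (hn : n ≠ 0) {a b : WithTop α} : n • a ≤ n • b ↔ a ≤ b := by
  induction b with
  | top => simp only [nsmul_top hn, le_top]
  | coe b =>
    induction a with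
    | top => simp only [nsmul_top hn, ← coe_nsmul, top_le_iff, coe_ne_top]
    | coe a => simp only [← coe_nsmul, coe_le_coe, nsmul_le_nsmul_iff_right hn]

end WithTop

section MultiplicativeMap

variable {R : Type*} {ν : R → WithTop ℚ}

theorem map_pow_of_map_mul [Monoid R] (hνmul : ∀ u v, ν (u * v) = ν u + ν v) (x : R)
    {n : ℕ} (hn : n ≠ 0) : ν (x ^ n) = n • ν x := by
  obtain ⟨n, rfl⟩ := Nat.exists_eq_succ_of_ne_zero hn
  induction n with
  | zero => simp
  | succ n ih => rw [pow_succ, hνmul, ih n.succ_ne_zero, succ_nsmul _ (n + 1)]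

theorem coe_le_of_mul_le_map_pow [Monoid R] (hνmul : ∀ u v, ν (u * v) = ν u + ν v)
    {n : ℕ} (hn : n ≠ 0) {x : R} {s : ℚ} (h : (((n : ℚ) * s : ℚ) : WithTop ℚ) ≤ ν (x ^ n)) :
    (s : WithTop ℚ) ≤ ν x := by
  rwa [map_pow_of_map_mul hνmul x hn, ← nsmul_eq_mul, WithTop.coe_nsmul,
    WithTop.nsmul_le_nsmul_iff hn] at h

-- Comparing `ν((-x)²) = ν(x²)` avoids having to know `ν 1`, which may be `⊤`.
theorem map_neg_of_map_mul [Ring R] (hνmul : ∀ u v, ν (u * v) = ν u + ν v) (x : R) :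
    ν (-x) = ν x := by
  have h : 2 • ν (-x) = 2 • ν x := by
    rw [← map_pow_of_map_mul hνmul _ two_ne_zero, ← map_pow_of_map_mul hνmul _ two_ne_zero,
      neg_sq]
  exact le_antisymm ((WithTop.nsmul_le_nsmul_iff two_ne_zero).1 h.le)
    ((WithTop.nsmul_le_nsmul_iff two_ne_zero).1 h.ge)

theorem min_le_map_sub_of_map_mul [Ring R] (hνmul : ∀ u v, ν (u * v) = ν u + ν v)
    (hνadd : ∀ u v, min (ν u) (ν v) ≤ ν (u + v)) (x y : R) :
    min (ν x) (ν y) ≤ ν (x - y) := by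
  simpa only [sub_eq_add_neg, map_neg_of_map_mul hνmul] using hνadd x (-y)

end MultiplicativeMap

section RootChain

variable {K : Type*} [Ring K]

-- The guard `j < p * j` only makes the recursion terminate; it holds for `j ≥ 1` and `p ≥ 2`.
def rootChain (ρ : K → K) (p N : ℕ) (a : ℕ → K) (j : ℕ) : K :=
  ρ ((if _ : j < p * j ∧ p * j ≤ N then rootChain ρ p N a (p * j) else 0) - a (p * j))
termination_by N - j
decreasing_by omega

theorem rootChain_pow {ρ : K → K} {p : ℕ} (hρ : ∀ x, ρ x ^ p = x) (N : ℕ) (a : ℕ → K)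
    {j : ℕ} (hj : j < p * j) :
    rootChain ρ p N a j ^ p
      = (if p * j ≤ N then rootChain ρ p N a (p * j) else 0) - a (p * j) := by
  rw [rootChain, hρ]
  simp only [hj, true_and, dite_eq_ite]

end RootChain

theorem coe_le_map_of_pow_eq_sub {K : Type*} [Ring K] {ν : K → WithTop ℚ}
    (hνmul : ∀ u v, ν (u * v) = ν u + ν v) (hνadd : ∀ u v, min (ν u) (ν v) ≤ ν (u + v))
    {p N : ℕ} (hp : 1 < p) {r0 δ : ℚ} (hδ : 0 ≤ δ) {a b : ℕ → K}
    (ha : ∀ i : ℕ, 1 ≤ i → (((p : ℚ) * (r0 * (i : ℚ) - δ) : ℚ) : WithTop ℚ) ≤ ν (a i))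
    (hb : ∀ j, 1 ≤ j → b j ^ p = (if p * j ≤ N then b (p * j) else 0) - a (p * j))
    {j : ℕ} (hj : 1 ≤ j) :
    ((r0 * ((p * j : ℕ) : ℚ) - δ : ℚ) : WithTop ℚ) ≤ ν (b j) := by
  induction h : N - j using Nat.strong_induction_on generalizing j with
  | _ m ih =>
  have hpj : j < p * j := lt_mul_left hj hp
  apply coe_le_of_mul_le_map_pow hνmul (by omega : p ≠ 0)
  rw [hb j hj]
  split_ifs with hle
  · refine le_trans (le_min ?_ (ha _ (by omega))) (min_le_map_sub_of_map_mul hνmul hνadd _ _)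
    refine le_trans ?_ (ih (N - p * j) (by omega) (by omega) rfl)
    have hp1 : (1 : ℚ) ≤ p := by exact_mod_cast hp.le
    exact_mod_cast (by push_cast; nlinarith)
  · rw [zero_sub, map_neg_of_map_mul hνmul]
    exact ha _ (by omega)

theorem approximation_lemma_general
    (p : ℕ) [hp : Fact p.Prime] (K : Type) [Field K]
    (hperfect : ∀ x : K, ∃ y : K, y ^ p = x)
    (ν : K → WithTop ℚ)
    (hν0 : ν 0 = ⊤)
    (hνmul : ∀ u v : K, ν (u * v) = ν u + ν v)
    (hνadd : ∀ u v : K, min (ν u) (ν v) ≤ ν (u + v))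
    (r0 δ : ℚ) (hδ : 0 ≤ δ) (N : ℕ)
    (a : ℕ → K)
    (ha : ∀ i : ℕ, 1 ≤ i → (((p : ℚ) * (r0 * (i : ℚ) - δ) : ℚ) : WithTop ℚ) ≤ ν (a i)) :
    ∃ b : ℕ → K,
      (∀ j : ℕ, 1 ≤ j → j ≤ N →
        (((p : ℚ) * (r0 * (j : ℚ) - δ) : ℚ) : WithTop ℚ) ≤ ν (b j)) ∧
      (∀ k : ℕ, 1 ≤ k →
        (((p : ℚ) * (r0 * (k : ℚ) - δ) : ℚ) : WithTop ℚ) ≤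
          ν (a k + (if p ∣ k ∧ k / p ≤ N then (b (k / p)) ^ p else 0)
              - (if k ≤ N then b k else 0))) ∧
      (∀ k : ℕ, 1 ≤ k → k ≤ N →
        a (p * k) + (if p ∣ p * k ∧ (p * k) / p ≤ N then (b ((p * k) / p)) ^ p else 0)
            - (if p * k ≤ N then b (p * k) else 0) = 0) := by
  have hp1 : 1 < p := hp.out.one_lt
  choose ρ hρ using hperfect
  set b := rootChain ρ p N a
  have hb_pow (j : ℕ) (hj : 1 ≤ j) :
      b j ^ p = (if p * j ≤ N then b (p * j) else 0) - a (p * j) :=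
    rootChain_pow hρ N a (lt_mul_left hj hp1)
  have hb (j : ℕ) (hj : 1 ≤ j) : (((p : ℚ) * (r0 * (j : ℚ) - δ) : ℚ) : WithTop ℚ) ≤ ν (b j) := by
    refine le_trans ?_ (coe_le_map_of_pow_eq_sub hνmul hνadd hp1 hδ ha hb_pow hj)
    have : (1 : ℚ) ≤ p := by exact_mod_cast hp1.le
    exact_mod_cast (by push_cast; nlinarith)
  have hc_zero (j : ℕ) (hj : 1 ≤ j) :
      a (p * j) + b j ^ p - (if p * j ≤ N then b (p * j) else 0) = 0 := by
    rw [hb_pow j hj]; ring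
  refine ⟨b, fun j hj _ => hb j hj, fun k hk => ?_, fun k hk hkN => ?_⟩
  · by_cases hdvd : p ∣ k ∧ k / p ≤ N
    · obtain ⟨⟨j, rfl⟩, hjN⟩ := hdvd
      rw [if_pos ⟨dvd_mul_right p j, hjN⟩, Nat.mul_div_cancel_left j hp.out.pos,
        hc_zero j (Nat.pos_of_mul_pos_left hk), hν0]
      exact le_top
    · rw [if_neg hdvd, add_zero]
      split_ifs with hkN
      · exact (le_min (ha k hk) (hb k hk)).trans (min_le_map_sub_of_map_mul hνmul hνadd _ _)
      · rw [sub_zero]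
        exact ha k hk
  · rw [if_pos ⟨dvd_mul_right p k, by rwa [Nat.mul_div_cancel_left k hp.out.pos]⟩,
      Nat.mul_div_cancel_left k hp.out.pos]
    exact hc_zero k hk

/-- **The approximation lemma** (Lemma 5.18 of the paper, equal-characteristic analogue of
Obus–Wewers): let `K` be a perfect field of characteristic `p` with an additive valuation
`ν : K → ℚ ∪ {∞}`, let `r₀, δ ∈ ℚ` with `δ ≥ 0`, `N ≥ 1` an integer, and `(a_i)_{i ≥ 1}`
elements of `K` with `ν(a_i) ≥ p(r₀·i − δ)`. Then there exist `b_1, …, b_N ∈ K` with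
`ν(b_j) ≥ p(r₀·j − δ)` such that the coefficients
`c_k = a_k + (b_{k/p})^p·[p ∣ k ∧ k/p ≤ N] − b_k·[k ≤ N]`
(the coefficients of `x^{-k}` in `F + a^p − a` for `a = Σ_{j=1}^N b_j x^{-j}` and
`F = Σ_{i≥1} a_i x^{-i}`) satisfy `ν(c_k) ≥ p(r₀·k − δ)` for all `k ≥ 1` and `c_{pk} = 0`
for all `1 ≤ k ≤ N`. -/
theorem approximation_lemma
    (p : ℕ) [hp : Fact p.Prime] (K : Type) [Field K] [CharP K p]
    (hperfect : ∀ x : K, ∃ y : K, y ^ p = x)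
    (ν : K → WithTop ℚ)
    (hν0 : ν 0 = ⊤)
    (hνmul : ∀ u v : K, ν (u * v) = ν u + ν v)
    (hνadd : ∀ u v : K, min (ν u) (ν v) ≤ ν (u + v))
    (r0 δ : ℚ) (hδ : 0 ≤ δ) (N : ℕ) (hN : 1 ≤ N)
    (a : ℕ → K)
    (ha : ∀ i : ℕ, 1 ≤ i → (((p : ℚ) * (r0 * (i : ℚ) - δ) : ℚ) : WithTop ℚ) ≤ ν (a i)) :
    ∃ b : ℕ → K,
      (∀ j : ℕ, 1 ≤ j → j ≤ N →
        (((p : ℚ) * (r0 * (j : ℚ) - δ) : ℚ) : WithTop ℚ) ≤ ν (b j)) ∧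
      (∀ k : ℕ, 1 ≤ k →
        (((p : ℚ) * (r0 * (k : ℚ) - δ) : ℚ) : WithTop ℚ) ≤
          ν (a k + (if p ∣ k ∧ k / p ≤ N then (b (k / p)) ^ p else 0)
              - (if k ≤ N then b k else 0))) ∧
      (∀ k : ℕ, 1 ≤ k → k ≤ N →
        a (p * k) + (if p ∣ p * k ∧ (p * k) / p ≤ N then (b ((p * k) / p)) ^ p else 0)
            - (if p * k ≤ N then b (p * k) else 0) = 0) :=
  approximation_lemma_general p (hp := hp) K hperfect ν hν0 hνmul hνadd r0 δ hδ N a ha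
end

section
/- Let L be a field of characteristic p > 0 equipped with an additive valuation ν : L^× → ℚ whose value group is all of ℚ. Let O = {u ∈ L : ν(u) ≥ 0} ∪ {0} be the valuation ring, κ its residue field, and red : O → κ the residue map. Let G ∈ L with ν(G) < 0, and choose π ∈ L with ν(π) = ν(G)/p (so ν(Gπ^{−p}) = 0). Then the following are equivalent: (a) red(Gπ^{−p}) ∈ κ^p := {w^p : w ∈ κ}; (b) there exists a ∈ L with ν(G + a^p − a) > ν(G). Consequently, if red(Gπ^{−p}) ∉ κ^p, then ν(G + a^p − a) ≤ ν(G) for every a ∈ L; that is, ν(G) = max_{a ∈ L} ν(G + a^p − a), the maximum over the Artin–Schreier class of G. (Condition (a) does not depend on the choice of π, since changing π multiplies red(Gπ^{−p}) by a nonzero p-th power in κ.) -/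
/-!
In characteristic `p`, the substitution `a = -b` turns `G + a ^ p - a` into `G - b ^ p + b`.
If `G π⁻ᵖ ≡ wᵖ` with `ν w ≥ 0`, then `b = w π` cancels the leading term of `G`, and
`ν b ≥ ν π > p ν π = ν G` because `ν π < 0`. Conversely, if `ν (G + a ^ p - a) > ν G`, then
`ν (a ^ p - a) = ν G < 0` forces `ν a < 0`, so `aᵖ` dominates, `p ν a = ν G = p ν π`, and
`w = -a / π` has valuation `0` and `p`-th power `G π⁻ᵖ` up to terms of positive valuation.
-/
section OrderedGroupWithTop

variable {Γ₀ : Type*} [LinearOrderedAddCommGroupWithTop Γ₀]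

theorem LinearOrderedAddCommGroupWithTop.nsmul_strictMono {n : ℕ} (hn : n ≠ 0) :
    StrictMono fun x : Γ₀ ↦ n • x := by
  intro x y hxy
  induction n with
  | zero => contradiction
  | succ m ih =>
    simp only [succ_nsmul]
    rcases eq_or_ne m 0 with rfl | hm
    · simpa using hxy
    · calc m • x + x < m • y + x := add_left_strictMono_of_ne_top (ne_top_of_lt hxy) (ih hm)
        _ ≤ m • y + y := by gcongr

theorem LinearOrderedAddCommGroupWithTop.nsmul_lt_self_of_neg {n : ℕ} (hn : 2 ≤ n) {x : Γ₀}
    (hx : x < 0) : n • x < x := by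
  obtain ⟨m, rfl⟩ := Nat.exists_eq_add_of_le' hn
  calc (m + 2) • x = (m + 1) • x + x := succ_nsmul x (m + 1)
    _ < 0 + x := by
      refine add_left_strictMono_of_ne_top (ne_top_of_lt hx) ?_
      simpa using nsmul_strictMono (Nat.succ_ne_zero m) hx
    _ = x := zero_add x

end OrderedGroupWithTop

namespace AddValuation

open LinearOrderedAddCommGroupWithTop

variable {R Γ₀ : Type*} [CommRing R] [LinearOrderedAddCommGroupWithTop Γ₀]
  (v : AddValuation R Γ₀) {p : ℕ} {G π : R}

theorem val_lt_of_val_pow_eq (hp : 2 ≤ p) (hGπ : v (π ^ p) = v G) (hG : v G < 0) :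
    v G < v π := by
  rw [← hGπ, map_pow] at hG ⊢
  have hπ : v π < 0 := lt_of_not_ge fun h ↦ hG.not_ge (nsmul_nonneg h p)
  exact nsmul_lt_self_of_neg hp hπ

theorem val_eq_of_val_lt_val_add_pow_sub (hp : 2 ≤ p) (hGπ : v (π ^ p) = v G) (hG : v G < 0)
    {a : R} (ha : v G < v (G + a ^ p - a)) : v a = v π := by
  have hdiff : v (a ^ p - a) = v G := by
    have := v.map_sub_eq_of_lt_right ha
    rwa [show G + a ^ p - a - G = a ^ p - a by ring] at this
  have ha_neg : v a < 0 := lt_of_not_ge fun h ↦ by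
    have := v.map_sub (a ^ p) a
    rw [hdiff, map_pow] at this
    exact hG.not_ge (le_trans (le_min (nsmul_nonneg h p) h) this)
  have hpow_lt : v (a ^ p) < v a := by
    rw [map_pow]
    exact nsmul_lt_self_of_neg hp ha_neg
  have hpow : v (a ^ p) = v G := (v.map_sub_eq_of_lt_left hpow_lt).symm.trans hdiff
  rw [← hGπ, map_pow, map_pow] at hpow
  exact (nsmul_strictMono (by omega)).injective hpow

theorem exists_val_lt_val_add_pow_sub_iff [Fact p.Prime] [CharP R p] (hGπ : v (π ^ p) = v G)
    (hG : v G < 0) :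
    (∃ b, v π ≤ v b ∧ v G < v (G - b ^ p)) ↔ ∃ a, v G < v (G + a ^ p - a) := by
  have hGπ_lt := v.val_lt_of_val_pow_eq (Fact.out : p.Prime).two_le hGπ hG
  have neg_pow (x : R) : (-x) ^ p = -x ^ p := by rw [neg_pow, neg_one_pow_char, neg_one_mul]
  constructor
  · rintro ⟨b, hb, hGb⟩
    refine ⟨-b, ?_⟩
    rw [neg_pow, show G + -b ^ p - -b = G - b ^ p + b by ring]
    exact lt_of_lt_of_le (lt_min hGb (hGπ_lt.trans_le hb)) (v.map_add _ _)
  · rintro ⟨a, ha⟩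
    have hva := v.val_eq_of_val_lt_val_add_pow_sub (Fact.out : p.Prime).two_le hGπ hG ha
    refine ⟨-a, by rw [map_neg, hva], ?_⟩
    rw [neg_pow, show G - -a ^ p = G + a ^ p - a + a by ring]
    exact lt_of_lt_of_le (lt_min ha (hva ▸ hGπ_lt)) (v.map_add _ _)

theorem exists_val_sub_pow_pos_iff {K : Type*} [Field K] (v : AddValuation K Γ₀) {G π : K}
    (hπ : π ≠ 0) :
    (∃ w, 0 ≤ v w ∧ 0 < v (G * (π ^ p)⁻¹ - w ^ p)) ↔
      ∃ b, v π ≤ v b ∧ v (π ^ p) < v (G - b ^ p) := by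
  have hvπ : v π ≠ ⊤ := v.ne_top_iff.2 hπ
  have hvπp : v (π ^ p) ≠ ⊤ := v.ne_top_iff.2 (pow_ne_zero p hπ)
  refine (Equiv.mulRight₀ π hπ).exists_congr fun w ↦ and_congr ?_ ?_
  · rw [Equiv.mulRight₀_apply, map_mul, ← add_le_add_iff_left_of_ne_top hvπ, zero_add]
  · rw [Equiv.mulRight₀_apply, ← add_lt_add_iff_left_of_ne_top hvπp, zero_add, ← map_mul,
      sub_mul, inv_mul_cancel_right₀ (pow_ne_zero p hπ), mul_pow]

end AddValuation

theorem depth_maximal_iff_residue_not_pth_power_general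
    (p : ℕ) [hp : Fact p.Prime] (L : Type) [Field L] [CharP L p]
    (ν : L → WithTop ℚ)
    (hν0 : ∀ u : L, ν u = ⊤ ↔ u = 0)
    (hνmul : ∀ u v : L, ν (u * v) = ν u + ν v)
    (hνadd : ∀ u v : L, min (ν u) (ν v) ≤ ν (u + v))
    (G : L) (hG : ν G < 0)
    (π : L) (hπ : ν (π ^ p) = ν G) :
    ((∃ w : L, 0 ≤ ν w ∧ 0 < ν (G * (π ^ p)⁻¹ - w ^ p)) ↔
        (∃ a : L, ν G < ν (G + a ^ p - a))) ∧
    ((¬ ∃ w : L, 0 ≤ ν w ∧ 0 < ν (G * (π ^ p)⁻¹ - w ^ p)) →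
        ∀ a : L, ν (G + a ^ p - a) ≤ ν G) := by
  have hν1 : ν 1 = 0 := by
    have h := hνmul 1 1
    rw [one_mul] at h
    exact (add_right_inj_of_ne_top ((hν0 1).not.2 one_ne_zero)).1
      (h.symm.trans (add_zero _).symm)
  let v := AddValuation.of ν ((hν0 0).2 rfl) hν1 hνadd hνmul
  have hπ0 : π ≠ 0 := by
    rintro rfl
    rw [zero_pow hp.out.ne_zero, (hν0 0).2 rfl] at hπ
    exact (hπ ▸ hG).not_ge le_top
  have hπv : v (π ^ p) = v G := hπ
  have key : (∃ w, 0 ≤ v w ∧ 0 < v (G * (π ^ p)⁻¹ - w ^ p)) ↔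
      ∃ a, v G < v (G + a ^ p - a) := by
    rw [v.exists_val_sub_pow_pos_iff hπ0, hπv]
    exact v.exists_val_lt_val_add_pow_sub_iff hπ hG
  exact ⟨key, fun h a ↦ not_lt.1 fun ha ↦ h (key.2 ⟨a, ha⟩)⟩

/-- **Maximality of the valuation in an Artin–Schreier class** (Proposition 5.16 of the
paper, valuation-theoretic form): let `L` be a field of characteristic `p > 0` with an
additive valuation `ν` whose value group is all of `ℚ` (with `ν(u) = ∞` iff `u = 0`).
Let `G ∈ L` with `ν(G) < 0` and let `π ∈ L` with `ν(π^p) = ν(G)` (i.e. `ν(π) = ν(G)/p`,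
so `ν(G·π^{-p}) = 0`). Then the residue of `G·π^{-p}` in the residue field `κ` of `ν` is
a `p`-th power (i.e. `G·π^{-p} ≡ w^p` modulo the maximal ideal for some `w` in the
valuation ring) **iff** there is `a ∈ L` with `ν(G + a^p − a) > ν(G)`. Consequently, if
the residue of `G·π^{-p}` is not a `p`-th power in `κ`, then
`ν(G) = max_{a ∈ L} ν(G + a^p − a)`, the maximum over the Artin–Schreier class of `G`. -/
theorem depth_maximal_iff_residue_not_pth_power
    (p : ℕ) [hp : Fact p.Prime] (L : Type) [Field L] [CharP L p]
    (ν : L → WithTop ℚ)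
    (hν0 : ∀ u : L, ν u = ⊤ ↔ u = 0)
    (hνmul : ∀ u v : L, ν (u * v) = ν u + ν v)
    (hνadd : ∀ u v : L, min (ν u) (ν v) ≤ ν (u + v))
    (hνsurj : ∀ q : ℚ, ∃ u : L, ν u = (q : WithTop ℚ))
    (G : L) (hG : ν G < 0)
    (π : L) (hπ : ν (π ^ p) = ν G) :
    ((∃ w : L, 0 ≤ ν w ∧ 0 < ν (G * (π ^ p)⁻¹ - w ^ p)) ↔
        (∃ a : L, ν G < ν (G + a ^ p - a))) ∧
    ((¬ ∃ w : L, 0 ≤ ν w ∧ 0 < ν (G * (π ^ p)⁻¹ - w ^ p)) →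
        ∀ a : L, ν (G + a ^ p - a) ≤ ν G) :=
  depth_maximal_iff_residue_not_pth_power_general p (hp := hp) L ν hν0 hνmul hνadd G hG π hπ
end

section
/- Let p be a prime, k a perfect field of characteristic p, c ∈ k, and let d_1, …, d_r ∈ k (r ≥ 2) be pairwise distinct. Let ι_1, …, ι_r be positive integers, let a be an integer with 1 ≤ a ≤ p − 1, and set ι'_1 := pι_1 − p + a + 1, ι'_2 := pι_2 − p + 1, and ι'_i := pι_i for 3 ≤ i ≤ r. Then in the rational function field k(x) there exist unique g_0, …, g_{p−1} ∈ k(x) with c^p / ((d_2 − d_1)^{p−a−1} ∏_{i=1}^r (x − d_i)^{ι'_i}) = Σ_{j=0}^{p−1} g_j^p x^j, and moreover g_{p−1} = c / ∏_{i=1}^r (x − d_i)^{ι_i}. Equivalently, the Cartier operator on Ω^1_{k(x)} sends ω' := c^p dx / ((d_2 − d_1)^{p−a−1} ∏_{i=1}^r (x − d_i)^{ι'_i}) to ω := c dx / ∏_{i=1}^r (x − d_i)^{ι_i}. -/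
/-!
Multiplying numerator and denominator by `H = (x - d₁)^(p-a-1) (x - d₂)^(p-1)` turns the
denominator of `ω'` into `D^p` with `D = ∏ (x - d_i)^ι_i`, so `ω' = (c / (e D))^p H dx` where
`e^p = (d₂ - d₁)^(p-a-1)`. As `deg H ≤ 2p - 2`, the `x^(p-1)`-component of `H` is the constant
whose `p`-th power is the coefficient of `x^(p-1)` in `H`; since
`(x - d₂)^(p-1) = Σ_{i<p} d₂^(p-1-i) x^i`, that coefficient is `(d₂ - d₁)^(p-a-1)`.
Uniqueness of the decomposition reduces, after clearing denominators, to polynomials, whose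
components are read off coefficientwise.
-/

open Polynomial

namespace Polynomial

variable {R : Type*} [CommRing R] {p : ℕ} [hp : Fact p.Prime] [CharP R p]

theorem coeff_pow_char (f : R[X]) (m : ℕ) :
    (f ^ p).coeff m = if p ∣ m then f.coeff (m / p) ^ p else 0 := by
  rw [← map_frobenius_expand (p := p), coeff_map, coeff_expand hp.out.pos,
    apply_ite (frobenius R p), map_zero, frobenius_def]

theorem coeff_sum_pow_mul_X_pow (h : Fin p → R[X]) (n : ℕ) (j : Fin p) :
    (∑ i : Fin p, h i ^ p * X ^ (i : ℕ)).coeff (p * n + j) = (h j).coeff n ^ p := by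
  rw [finsetSum_coeff, Finset.sum_eq_single j]
  · rw [coeff_mul_X_pow, coeff_pow_char, if_pos (dvd_mul_right p n),
      Nat.mul_div_cancel_left n hp.out.pos]
  · intro i _ hij
    rw [coeff_mul_X_pow', coeff_pow_char]
    split_ifs with hle hdvd <;> try rfl
    obtain ⟨q, hq⟩ := hdvd
    have hmod := congrArg (· % p) (Nat.sub_add_cancel hle)
    simp only [hq, Nat.mul_add_mod, Nat.mod_eq_of_lt i.isLt, Nat.mod_eq_of_lt j.isLt] at hmod
    exact absurd (Fin.ext hmod) hij
  · simp

theorem sum_pow_mul_X_pow_eq_zero [IsReduced R] {h : Fin p → R[X]}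
    (hh : ∑ i : Fin p, h i ^ p * X ^ (i : ℕ) = 0) : h = 0 := by
  ext j n
  have := coeff_sum_pow_mul_X_pow h n j
  rw [hh, coeff_zero, eq_comm] at this
  exact IsReduced.eq_zero _ ⟨p, this⟩

theorem exists_sum_pow_mul_X_pow [PerfectRing R p] (f : R[X]) :
    ∃ h : Fin p → R[X], ∑ i : Fin p, h i ^ p * X ^ (i : ℕ) = f := by
  induction f using Polynomial.induction_on' with
  | add f g hf hg =>
    obtain ⟨h, rfl⟩ := hf
    obtain ⟨h', rfl⟩ := hg
    exact ⟨h + h', by simp only [Pi.add_apply, add_pow_char, add_mul, Finset.sum_add_distrib]⟩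
  | monomial m a =>
    obtain ⟨b, rfl⟩ := surjective_frobenius R p a
    let j : Fin p := ⟨m % p, Nat.mod_lt m hp.out.pos⟩
    refine ⟨Pi.single j (C b * X ^ (m / p)), ?_⟩
    rw [Finset.sum_eq_single j (fun i _ hij => by simp [hij, hp.out.ne_zero]) (by simp),
      Pi.single_eq_same, mul_pow, ← C_pow, ← pow_mul, mul_assoc, ← pow_add, ← frobenius_def,
      C_mul_X_pow_eq_monomial, mul_comm, Nat.div_add_mod]

theorem eq_C_of_sum_pow_mul_X_pow_eq [IsReduced R] {h : Fin p → R[X]} {f : R[X]}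
    (hh : ∑ i : Fin p, h i ^ p * X ^ (i : ℕ) = f) {j : Fin p} (hdeg : f.natDegree < p + j)
    {e : R} (he : e ^ p = f.coeff j) : h j = C e := by
  ext n
  apply frobenius_inj R p
  rw [frobenius_def, frobenius_def, ← coeff_sum_pow_mul_X_pow h n j, hh]
  rcases n with _ | n
  · rw [coeff_C_zero, he, mul_zero, zero_add]
  · have : f.natDegree < p * (n + 1) + j := by
      nlinarith [Nat.le_mul_of_pos_right p n.succ_pos]
    rw [coeff_C_of_ne_zero n.succ_ne_zero, coeff_eq_zero_of_natDegree_lt this,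
      zero_pow hp.out.ne_zero]

variable [IsDomain R]

theorem X_sub_C_pow_pred_eq_sum (b : R) :
    (X - C b) ^ (p - 1) = ∑ i ∈ Finset.range p, C (b ^ (p - 1 - i)) * X ^ i := by
  apply mul_right_cancel₀ (X_sub_C_ne_zero b)
  rw [← pow_succ, Nat.sub_add_cancel hp.out.one_lt.le, sub_pow_char, ← geom_sum₂_mul]
  congr 1
  refine Finset.sum_congr rfl fun i _ => ?_
  rw [C_pow, mul_comm]

theorem coeff_X_sub_C_pow_pred (b : R) {i : ℕ} (hi : i < p) :
    ((X - C b) ^ (p - 1)).coeff i = b ^ (p - 1 - i) := by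
  simp only [X_sub_C_pow_pred_eq_sum, finsetSum_coeff, coeff_C_mul_X_pow]
  simp [hi]

theorem coeff_mul_X_sub_C_pow_pred {g : R[X]} (hg : g.natDegree < p) (b : R) :
    (g * (X - C b) ^ (p - 1)).coeff (p - 1) = g.eval b := by
  rw [coeff_mul, Finset.Nat.sum_antidiagonal_eq_sum_range_succ_mk, Nat.succ_eq_add_one,
    Nat.sub_add_cancel hp.out.one_lt.le, eval_eq_sum_range' hg]
  refine Finset.sum_congr rfl fun i hi => ?_
  rw [coeff_X_sub_C_pow_pred b (by omega), Nat.sub_sub_self (by simp at hi; omega)]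

theorem eq_C_of_sum_pow_mul_X_pow_eq_X_sub_C_pow_mul {h : Fin p → R[X]} {a b : R} {n : ℕ}
    (hn : n < p) (hh : ∑ i : Fin p, h i ^ p * X ^ (i : ℕ) = (X - C a) ^ n * (X - C b) ^ (p - 1))
    {e : R} (he : e ^ p = (b - a) ^ n) : h ⟨p - 1, Nat.sub_lt hp.out.pos one_pos⟩ = C e := by
  have hmonic_a := (monic_X_sub_C a).pow n
  have hmonic_b := (monic_X_sub_C b).pow (p - 1)
  refine eq_C_of_sum_pow_mul_X_pow_eq hh ?_ ?_
  · rw [hmonic_a.natDegree_mul hmonic_b, natDegree_pow, natDegree_pow, natDegree_X_sub_C,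
      natDegree_X_sub_C]
    dsimp only
    omega
  · rw [coeff_mul_X_sub_C_pow_pred (by simpa using hn), eval_pow, eval_sub, eval_X, eval_C, he]

end Polynomial

theorem Fintype.prod_pow_mul_pow_mul_pow_eq_pow {ι M : Type*} [Fintype ι] [CommMonoid M]
    (f : ι → M) {e e' : ι → ℕ} {m : ℕ} {i₀ i₁ : ι} (hne : i₀ ≠ i₁) {n₀ n₁ : ℕ}
    (h₀ : e' i₀ + n₀ = m * e i₀) (h₁ : e' i₁ + n₁ = m * e i₁)
    (hrest : ∀ i, i ≠ i₀ → i ≠ i₁ → e' i = m * e i) :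
    (∏ i, f i ^ e' i) * (f i₀ ^ n₀ * f i₁ ^ n₁) = (∏ i, f i ^ e i) ^ m := by
  classical
  let ε : ι → ℕ := fun i => if i = i₀ then n₀ else if i = i₁ then n₁ else 0
  have hε : f i₀ ^ n₀ * f i₁ ^ n₁ = ∏ i, f i ^ ε i := by
    rw [Fintype.prod_eq_mul i₀ i₁ hne fun i hi => by simp [ε, hi.1, hi.2]]
    simp [ε, hne.symm]
  rw [hε, ← Finset.prod_mul_distrib, ← Finset.prod_pow]
  refine Finset.prod_congr rfl fun i _ => ?_
  rw [← pow_add, ← pow_mul, mul_comm (e i)]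
  congr 1
  by_cases hi₀ : i = i₀
  · subst hi₀; simpa [ε] using h₀
  by_cases hi₁ : i = i₁
  · subst hi₁; simpa [ε, hi₀] using h₁
  simpa [ε, hi₀, hi₁] using hrest i hi₀ hi₁

namespace RatFunc

variable {K : Type*} [Field K] {p : ℕ}

theorem div_eq_sum_pow_mul_X_pow {f : K[X]} {h : Fin p → K[X]}
    (hh : ∑ i : Fin p, h i ^ p * Polynomial.X ^ (i : ℕ) = f) (hf : f ≠ 0) {P D : RatFunc K}
    (hPD : P * algebraMap K[X] (RatFunc K) f = D ^ p) (u : RatFunc K) :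
    u ^ p / P = ∑ i : Fin p, (algebraMap K[X] (RatFunc K) (h i) * (u / D)) ^ p * X ^ (i : ℕ) := by
  have hf' := algebraMap_ne_zero hf
  calc u ^ p / P = algebraMap K[X] (RatFunc K) f * (u / D) ^ p := by
        rw [div_pow, ← hPD, mul_comm P, ← div_div, ← mul_div_assoc, mul_div_cancel₀ _ hf']
    _ = _ := by
        rw [← hh, map_sum, Finset.sum_mul]
        refine Finset.sum_congr rfl fun i _ => ?_
        rw [map_mul, map_pow, map_pow, algebraMap_X]
        ring

variable [Fact p.Prime] [CharP K p]

theorem sum_pow_mul_X_pow_eq_zero {g : Fin p → RatFunc K}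
    (hg : ∑ i : Fin p, g i ^ p * X ^ (i : ℕ) = 0) : g = 0 := by
  obtain ⟨b, hb⟩ := IsLocalization.exist_integer_multiples (nonZeroDivisors K[X]) Finset.univ g
  choose A hA using fun i => hb i (Finset.mem_univ i)
  have hA0 : A = 0 := by
    refine Polynomial.sum_pow_mul_X_pow_eq_zero (algebraMap_injective K ?_)
    simp only [map_sum, map_mul, map_pow, hA, Algebra.smul_def, algebraMap_X, mul_pow,
      mul_assoc, ← Finset.mul_sum, hg, mul_zero, map_zero]
  ext i
  have hb0 : algebraMap K[X] (RatFunc K) b ≠ 0 :=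
    algebraMap_ne_zero (nonZeroDivisors.coe_ne_zero b)
  have := hA i
  rw [hA0, Pi.zero_apply, map_zero, Algebra.smul_def, eq_comm, mul_eq_zero] at this
  exact this.resolve_left hb0

theorem sum_pow_mul_X_pow_injective :
    Function.Injective fun g : Fin p → RatFunc K => ∑ i : Fin p, g i ^ p * X ^ (i : ℕ) := by
  intro g g' hgg'
  rw [← sub_eq_zero]
  apply sum_pow_mul_X_pow_eq_zero
  simp only [Pi.sub_apply, sub_pow_char, sub_mul, Finset.sum_sub_distrib]
  exact sub_eq_zero.mpr hgg'

end RatFunc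

/-- **An explicit solution of the Cartier operator equation** (Proposition 6.1 of the
paper): let `k` be a perfect field of characteristic `p`, `c ∈ k`, and `d_1, …, d_r ∈ k`
(`r ≥ 2`) pairwise distinct. Let `ι_1, …, ι_r` be positive integers, `1 ≤ a ≤ p − 1`, and
set `ι'_1 = pι_1 − p + a + 1`, `ι'_2 = pι_2 − p + 1`, `ι'_i = pι_i` for `i ≥ 3`. Then in
`k(x)` there exist unique `g_0, …, g_{p−1}` with
`c^p / ((d_2 − d_1)^{p−a−1} ∏ (x − d_i)^{ι'_i}) = Σ_{j=0}^{p−1} g_j^p x^j`,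
and moreover `g_{p−1} = c / ∏ (x − d_i)^{ι_i}`; i.e. the Cartier operator sends
`ω' = c^p dx / ((d_2 − d_1)^{p−a−1} ∏ (x − d_i)^{ι'_i})` to
`ω = c dx / ∏ (x − d_i)^{ι_i}`. -/
theorem cartier_equation_solution
    (p : ℕ) [hp : Fact p.Prime] (k : Type) [Field k] [CharP k p] [PerfectField k]
    (c : k) (r : ℕ) (hr : 2 ≤ r)
    (d : Fin r → k) (hd : Function.Injective d)
    (ι : Fin r → ℕ) (hι : ∀ i, 0 < ι i)
    (a : ℕ) (ha2 : a ≤ p - 1)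
    (ι' : Fin r → ℕ)
    (hι'0 : ι' ⟨0, by omega⟩ = p * ι ⟨0, by omega⟩ - p + a + 1)
    (hι'1 : ι' ⟨1, by omega⟩ = p * ι ⟨1, by omega⟩ - p + 1)
    (hι'rest : ∀ i : Fin r, (i : ℕ) ≠ 0 → (i : ℕ) ≠ 1 → ι' i = p * ι i) :
    (∃! g : Fin p → RatFunc k,
        (RatFunc.C c) ^ p /
            ((RatFunc.C (d ⟨1, by omega⟩ - d ⟨0, by omega⟩)) ^ (p - a - 1) *
              ∏ i : Fin r, (RatFunc.X - RatFunc.C (d i)) ^ (ι' i)) =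
          ∑ j : Fin p, (g j) ^ p * RatFunc.X ^ (j : ℕ)) ∧
    (∀ g : Fin p → RatFunc k,
        (RatFunc.C c) ^ p /
            ((RatFunc.C (d ⟨1, by omega⟩ - d ⟨0, by omega⟩)) ^ (p - a - 1) *
              ∏ i : Fin r, (RatFunc.X - RatFunc.C (d i)) ^ (ι' i)) =
          ∑ j : Fin p, (g j) ^ p * RatFunc.X ^ (j : ℕ) →
        g ⟨p - 1, Nat.sub_lt hp.out.pos Nat.one_pos⟩ =
          RatFunc.C c / ∏ i : Fin r, (RatFunc.X - RatFunc.C (d i)) ^ (ι i)) := by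
  have hp1 := hp.out.one_lt
  set i₀ : Fin r := ⟨0, by omega⟩
  set i₁ : Fin r := ⟨1, by omega⟩
  have h01 : i₀ ≠ i₁ := by simp [i₀, i₁, Fin.ext_iff]
  obtain ⟨e, he⟩ := surjective_frobenius k p ((d i₁ - d i₀) ^ (p - a - 1))
  rw [frobenius_def] at he
  have he0 : e ≠ 0 := by
    rintro rfl
    rw [zero_pow hp.out.ne_zero, eq_comm] at he
    exact h01 (hd (sub_eq_zero.mp (eq_zero_of_pow_eq_zero he))).symm
  set H : k[X] := (X - C (d i₀)) ^ (p - a - 1) * (X - C (d i₁)) ^ (p - 1)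
  obtain ⟨h, hh⟩ := exists_sum_pow_mul_X_pow (p := p) H
  have hlast := eq_C_of_sum_pow_mul_X_pow_eq_X_sub_C_pow_mul (by omega) hh he
  have hprod : (∏ i, (RatFunc.X - RatFunc.C (d i)) ^ ι' i) * algebraMap k[X] (RatFunc k) H =
      (∏ i, (RatFunc.X - RatFunc.C (d i)) ^ ι i) ^ p := by
    simp only [H, map_mul, map_pow, map_sub, RatFunc.algebraMap_X, RatFunc.algebraMap_C]
    refine Fintype.prod_pow_mul_pow_mul_pow_eq_pow _ h01 ?_ ?_ fun i h₀ h₁ => hι'rest i ?_ ?_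
    · have := Nat.le_mul_of_pos_right p (hι i₀); omega
    · have := Nat.le_mul_of_pos_right p (hι i₁); omega
    · exact fun h => h₀ (Fin.ext h)
    · exact fun h => h₁ (Fin.ext h)
  have hH0 : H ≠ 0 :=
    mul_ne_zero (pow_ne_zero _ (X_sub_C_ne_zero _)) (pow_ne_zero _ (X_sub_C_ne_zero _))
  have hsol := RatFunc.div_eq_sum_pow_mul_X_pow hh hH0 hprod (RatFunc.C c / RatFunc.C e)
  rw [div_pow, ← map_pow RatFunc.C e, he, map_pow, div_div] at hsol
  refine ⟨⟨_, hsol, fun g hg => RatFunc.sum_pow_mul_X_pow_injective (hg.symm.trans hsol)⟩,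
    fun g hg => ?_⟩
  rw [RatFunc.sum_pow_mul_X_pow_injective (hg.symm.trans hsol)]
  dsimp only
  rw [hlast, RatFunc.algebraMap_C, div_div, mul_div_assoc',
    mul_div_mul_left _ _ ((_root_.map_ne_zero _).mpr he0)]
end

section
/- Let p be a prime and K a field equipped with an additive valuation ν : K → ℚ ∪ {∞}. Let r_0, s, δ ∈ ℚ with 0 < s < r_0 and δ ≥ 0, and let N be a positive integer with pN(r_0 − s) ≥ δ. Let (c_k)_{k ≥ 1} be elements of K satisfying ν(c_k) ≥ p(r_0·k − δ) for all k ≥ 1, and c_{pk} = 0 for all 1 ≤ k ≤ N. Then for every rational r with 0 < r ≤ s and every k ≥ 1 with ν(c_k) < p·r·k, the index k is prime to p. In particular, any index at which the infimum of (ν(c_k) − p·r·k)_{k ≥ 1} is attained with a negative value is prime to p. -/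
/-! A multiple `k = p m` of `p` cannot satisfy `ν(c_k) < p r k`: if `m ≤ N` then `c_k = 0`,
and if `m > N` then `δ ≤ p N (r₀ - s) ≤ (r₀ - r) k`, so the a priori bound `p (r₀ k - δ)`
already dominates `p r k`. -/

theorem mul_le_mul_sub_of_le_mul_sub {r r₀ s δ n k : ℚ} (hδ : δ ≤ n * (r₀ - s))
    (hsr₀ : s ≤ r₀) (hrs : r ≤ s) (hn : 0 ≤ n) (hnk : n ≤ k) : r * k ≤ r₀ * k - δ := by
  nlinarith [mul_nonneg (sub_nonneg.2 hrs) (hn.trans hnk),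
    mul_nonneg (sub_nonneg.2 hsr₀) (sub_nonneg.2 hnk)]

theorem coprime_of_lt_of_le_valuation {p N : ℕ} (hp : p.Prime) {r₀ s δ r : ℚ}
    (hsr₀ : s ≤ r₀) (hNbound : δ ≤ p * N * (r₀ - s)) {v : ℕ → WithTop ℚ}
    (hv : ∀ k : ℕ, 1 ≤ k → (((p : ℚ) * (r₀ * k - δ) : ℚ) : WithTop ℚ) ≤ v k)
    (hv_top : ∀ m, 1 ≤ m → m ≤ N → v (p * m) = ⊤) (hrs : r ≤ s) {k : ℕ} (hk : 1 ≤ k)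
    (hlt : v k < (((p : ℚ) * (r * k) : ℚ) : WithTop ℚ)) : k.Coprime p := by
  rw [Nat.coprime_comm, hp.coprime_iff_not_dvd]
  rintro ⟨m, rfl⟩
  have hm : 1 ≤ m := Nat.pos_of_mul_pos_left hk
  by_cases hmN : m ≤ N
  · rw [hv_top m hm hmN] at hlt
    exact not_top_lt hlt
  · have hNm : ((p * N : ℕ) : ℚ) ≤ ((p * m : ℕ) : ℚ) := by
      exact_mod_cast Nat.mul_le_mul_left p (Nat.le_of_not_le hmN)
    have key : (p : ℚ) * (r * ((p * m : ℕ) : ℚ)) ≤ p * (r₀ * ((p * m : ℕ) : ℚ) - δ) :=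
      mul_le_mul_of_nonneg_left
        (mul_le_mul_sub_of_le_mul_sub (by push_cast; exact hNbound) hsr₀ hrs
          (Nat.cast_nonneg _) hNm) (Nat.cast_nonneg p)
    exact hlt.not_ge ((WithTop.coe_le_coe.2 key).trans (hv _ hk))

theorem dominant_index_prime_to_p_general
    (p : ℕ) [hp : Fact p.Prime] (K : Type) [Field K]
    (ν : K → WithTop ℚ)
    (hν0 : ν 0 = ⊤)
    (r0 s δ : ℚ) (hsr0 : s < r0)
    (N : ℕ) (hNbound : δ ≤ (p : ℚ) * N * (r0 - s))
    (c : ℕ → K)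
    (hc : ∀ k : ℕ, 1 ≤ k →
      (((p : ℚ) * (r0 * (k : ℚ) - δ) : ℚ) : WithTop ℚ) ≤ ν (c k))
    (hczero : ∀ k : ℕ, 1 ≤ k → k ≤ N → c (p * k) = 0) :
    ∀ r : ℚ, 0 < r → r ≤ s → ∀ k : ℕ, 1 ≤ k →
      ν (c k) < (((p : ℚ) * (r * (k : ℚ)) : ℚ) : WithTop ℚ) → Nat.Coprime k p := by
  intro r _ hrs k hk hlt
  exact coprime_of_lt_of_le_valuation hp.out hsr0.le hNbound (v := ν ∘ c) hc
    (fun m hm hmN => by rw [Function.comp_apply, hczero m hm hmN, hν0]) hrs hk hlt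

/-- **Prime-to-`p` dominance of coefficients** (key step of Proposition 5.19 of the
paper): let `K` be a field with an additive valuation `ν : K → ℚ ∪ {∞}`, let
`0 < s < r₀` be rationals, `δ ≥ 0`, and `N ≥ 1` an integer with `pN(r₀ − s) ≥ δ`. If
`(c_k)_{k ≥ 1}` are elements of `K` with `ν(c_k) ≥ p(r₀·k − δ)` for all `k ≥ 1` and
`c_{pk} = 0` for `1 ≤ k ≤ N`, then for every rational `0 < r ≤ s` and every `k ≥ 1` with
`ν(c_k) < p·r·k`, the index `k` is prime to `p`. -/
theorem dominant_index_prime_to_p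
    (p : ℕ) [hp : Fact p.Prime] (K : Type) [Field K]
    (ν : K → WithTop ℚ)
    (hν0 : ν 0 = ⊤)
    (hνmul : ∀ u v : K, ν (u * v) = ν u + ν v)
    (hνadd : ∀ u v : K, min (ν u) (ν v) ≤ ν (u + v))
    (r0 s δ : ℚ) (hs0 : 0 < s) (hsr0 : s < r0) (hδ : 0 ≤ δ)
    (N : ℕ) (hN : 1 ≤ N) (hNbound : δ ≤ (p : ℚ) * N * (r0 - s))
    (c : ℕ → K)
    (hc : ∀ k : ℕ, 1 ≤ k →
      (((p : ℚ) * (r0 * (k : ℚ) - δ) : ℚ) : WithTop ℚ) ≤ ν (c k))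
    (hczero : ∀ k : ℕ, 1 ≤ k → k ≤ N → c (p * k) = 0) :
    ∀ r : ℚ, 0 < r → r ≤ s → ∀ k : ℕ, 1 ≤ k →
      ν (c k) < (((p : ℚ) * (r * (k : ℚ)) : ℚ) : WithTop ℚ) → Nat.Coprime k p :=
  dominant_index_prime_to_p_general p (hp := hp) K ν hν0 r0 s δ hsr0 N hNbound c hc hczero
end
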